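/- Define β₄(x, y, t) = −3x − (4/π)y − (2/π)t + (16/π)x² and β₆(x, y, t) = −4y + (48/π)xy + (24/π)xt. Let u₄, u₆ : ℝ → ℝ be differentiable at 0, with β₄(u₄(t), u₆(t), t) = 0 and β₆(u₄(t), u₆(t), t) = 0 for all t in a neighborhood of 0, and (u₄(0), u₆(0)) = (0, 0). Then u₄′(0) = −2/(3π) and u₆′(0) = 0. -/

import Mathlib

open Real Filter Topology

/-- One-loop β-function of the quartic coupling for the `p = 3` model with
disorder coupling `t`. -/
noncomputable def beta4 (x y t : ℝ) : ℝ :=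
  -3 * x - (4 / π) * y - (2 / π) * t + (16 / π) * x ^ 2

/-- One-loop β-function of the local sextic coupling for the `p = 3` model with
disorder coupling `t`. -/
noncomputable def beta6 (x y t : ℝ) : ℝ :=
  -4 * y + (48 / π) * x * y + (24 / π) * x * t

/-! Differentiating the identities `β₄ = β₆ = 0` along the trajectory at `t = 0` gives a linear
system for `(u₄′(0), u₆′(0))`, which at the origin is triangular and uniquely solvable. -/

theorem HasDerivAt.eq_zero_of_eventuallyEq_zero {𝕜 F : Type*} [NontriviallyNormedField 𝕜]
    [NormedAddCommGroup F] [NormedSpace 𝕜 F] {f : 𝕜 → F} {f' : F} {x : 𝕜}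
    (hf : HasDerivAt f f' x) (h : f =ᶠ[𝓝 x] 0) : f' = 0 :=
  hf.unique ((hasDerivAt_const x (0 : F)).congr_of_eventuallyEq h)

section Trajectory

variable {u v : ℝ → ℝ} {a b s : ℝ}

theorem HasDerivAt.beta4_comp (hu : HasDerivAt u a s) (hv : HasDerivAt v b s) :
    HasDerivAt (fun t => beta4 (u t) (v t) t)
      (-3 * a - (4 / π) * b - 2 / π + (32 / π) * u s * a) s :=
  ((((hu.const_mul (-3)).fun_sub (hv.const_mul (4 / π))).fun_sub
    ((hasDerivAt_id' s).const_mul (2 / π))).fun_add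
    ((hu.pow 2).const_mul (16 / π))).congr_deriv (by norm_num; ring)

theorem HasDerivAt.beta6_comp (hu : HasDerivAt u a s) (hv : HasDerivAt v b s) :
    HasDerivAt (fun t => beta6 (u t) (v t) t)
      (-4 * b + (48 / π) * (a * v s + u s * b) + (24 / π) * (a * s + u s)) s := by
  have h := ((hv.const_mul (-4)).fun_add ((hu.fun_mul hv).const_mul (48 / π))).fun_add
    ((hu.fun_mul (hasDerivAt_id' s)).const_mul (24 / π))
  simpa only [beta6, mul_assoc, mul_one] using h

end Trajectory

/-- First-order expansion of the '+' fixed trajectory of the `p = 3` model: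
if `(u₄(t), u₆(t))` is a fixed trajectory with `(u₄(0), u₆(0)) = (0, 0)`,
then `u₄′(0) = −2/(3π)` and `u₆′(0) = 0`. -/
theorem p3_plus_fixed_trajectory (u₄ u₆ : ℝ → ℝ)
    (h₄ : DifferentiableAt ℝ u₄ 0) (h₆ : DifferentiableAt ℝ u₆ 0)
    (hfix : ∀ᶠ t in 𝓝 (0 : ℝ), beta4 (u₄ t) (u₆ t) t = 0 ∧ beta6 (u₄ t) (u₆ t) t = 0)
    (h₄0 : u₄ 0 = 0) (h₆0 : u₆ 0 = 0) :
    deriv u₄ 0 = -2 / (3 * π) ∧ deriv u₆ 0 = 0 := by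
  have e₄ : -3 * deriv u₄ 0 - (4 / π) * deriv u₆ 0 - 2 / π = 0 := by
    simpa only [h₄0, mul_zero, zero_mul, add_zero] using
      (h₄.hasDerivAt.beta4_comp h₆.hasDerivAt).eq_zero_of_eventuallyEq_zero
        (hfix.mono fun _ ht => ht.1)
  have e₆ : -4 * deriv u₆ 0 = 0 := by
    simpa only [h₄0, h₆0, mul_zero, zero_mul, add_zero] using
      (h₄.hasDerivAt.beta6_comp h₆.hasDerivAt).eq_zero_of_eventuallyEq_zero
        (hfix.mono fun _ ht => ht.2)
  have hb : deriv u₆ 0 = 0 := by linarith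
  refine ⟨?_, hb⟩
  rw [hb] at e₄
  field_simp at e₄ ⊢
  linarith
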